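/- arXiv:1205.0713 — 2 statements merged into one kernel-verified Lean document; each statement's English description precedes it below -/
import Mathlib

section
/- Fix Δ > 0 and (x, y), (x', y') ∈ ℝ^m × ℝ^k with |x|, |x'|, |y|, |y'| ≤ Δ. For τ' ∈ (0, 1], let C' = {(z' x', (τ'/z') y') : z' ∈ [τ', 1]} and let C = {(z x, 0) : z ∈ [0,1]} ∪ {(0, w y) : w ∈ [0,1]}. Then the Hausdorff distance satisfies d_H(C', C) ≤ |x' - x| + |y' - y| + 4Δ√(τ'). In particular, as (τ', x', y') → (0, x, y), the broken flow-line images converge in the Hausdorff distance. -/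
/-!
Both images are linear images of planar sets under `(a, b) ↦ (a • x, b • y)`, which is
`max ‖x‖ ‖y‖`-Lipschitz for the sup metric on `ℝ × ℝ`: the flow segment is the image of the
hyperbola arc `{a * b = τ} ∩ [0,1]²`, the broken trajectory that of the two unit segments on the
axes. One coordinate of a point of the arc is at most `√τ`, so the point is `√τ`-close to an axis;
conversely a point `(z, 0)` of an axis is `√τ`-close to `(z, τ / z)` if `z ≥ √τ` and to `(√τ, √τ)`
otherwise. Replacing `(x, y)` by `(x', y')` moves each image point of the arc by at most
`max ‖x' - x‖ ‖y' - y‖`, and the triangle inequality for the Hausdorff distance concludes.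
-/

/-- Image of the finite flow segment with rescaled transition time `τ ∈ (0,1]`
and endpoint data `x, y`. -/
def flowSegImage (m k : ℕ) (τ : ℝ) (x : EuclideanSpace ℝ (Fin m))
    (y : EuclideanSpace ℝ (Fin k)) :
    Set (EuclideanSpace ℝ (Fin m) × EuclideanSpace ℝ (Fin k)) :=
  {p | ∃ z ∈ Set.Icc τ 1, p = (z • x, (τ / z) • y)}

/-- Image of the broken trajectory (`τ = 0`) with data `x, y`. -/
def brokenSegImage (m k : ℕ) (x : EuclideanSpace ℝ (Fin m))
    (y : EuclideanSpace ℝ (Fin k)) :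
    Set (EuclideanSpace ℝ (Fin m) × EuclideanSpace ℝ (Fin k)) :=
  {p | ∃ z ∈ Set.Icc (0:ℝ) 1, p = (z • x, 0)} ∪
    {p | ∃ w ∈ Set.Icc (0:ℝ) 1, p = (0, w • y)}

open Set Metric Filter Topology
open scoped NNReal

section Hausdorff

variable {α β : Type*} [PseudoMetricSpace β]

theorem hausdorffEDist_image_image_le {f g : α → β} {s : Set α} {r : ℝ}
    (h : ∀ a ∈ s, dist (f a) (g a) ≤ r) :
    hausdorffEDist (f '' s) (g '' s) ≤ ENNReal.ofReal r := by
  refine hausdorffEDist_le_of_mem_edist ?_ ?_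
  · rintro _ ⟨a, ha, rfl⟩
    exact ⟨g a, mem_image_of_mem g ha, by
      rw [edist_dist]; exact ENNReal.ofReal_le_ofReal (h a ha)⟩
  · rintro _ ⟨a, ha, rfl⟩
    exact ⟨f a, mem_image_of_mem f ha, by
      rw [edist_dist, dist_comm]; exact ENNReal.ofReal_le_ofReal (h a ha)⟩

theorem LipschitzWith.hausdorffEDist_image_le_of_mem_dist [PseudoMetricSpace α] {f : α → β}
    {K : ℝ≥0} (hf : LipschitzWith K f) {s t : Set α} {r : ℝ}
    (H1 : ∀ a ∈ s, ∃ b ∈ t, dist a b ≤ r) (H2 : ∀ b ∈ t, ∃ a ∈ s, dist a b ≤ r) :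
    hausdorffEDist (f '' s) (f '' t) ≤ ENNReal.ofReal (K * r) := by
  have hfr : ∀ a b, dist a b ≤ r → edist (f a) (f b) ≤ ENNReal.ofReal (K * r) := fun a b hab ↦ by
    rw [edist_dist]
    exact ENNReal.ofReal_le_ofReal ((hf.dist_le_mul a b).trans (by gcongr))
  refine hausdorffEDist_le_of_mem_edist ?_ ?_
  · rintro _ ⟨a, ha, rfl⟩
    obtain ⟨b, hb, hab⟩ := H1 a ha
    exact ⟨f b, mem_image_of_mem f hb, hfr a b hab⟩
  · rintro _ ⟨b, hb, rfl⟩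
    obtain ⟨a, ha, hab⟩ := H2 b hb
    exact ⟨f a, mem_image_of_mem f ha, by rw [edist_comm]; exact hfr a b hab⟩

end Hausdorff

def hyperbolaArc (τ : ℝ) : Set (ℝ × ℝ) :=
  {p | p.1 ∈ Icc 0 1 ∧ p.2 ∈ Icc 0 1 ∧ p.1 * p.2 = τ}

def axesCorner : Set (ℝ × ℝ) :=
  Icc 0 1 ×ˢ {0} ∪ {0} ×ˢ Icc 0 1

theorem norm_le_one_of_mem_hyperbolaArc {τ : ℝ} {p : ℝ × ℝ} (hp : p ∈ hyperbolaArc τ) :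
    ‖p‖ ≤ 1 := by
  obtain ⟨⟨h0, h1⟩, ⟨h0', h1'⟩, -⟩ := hp
  rw [Prod.norm_def, Real.norm_of_nonneg h0, Real.norm_of_nonneg h0']
  exact max_le h1 h1'

theorem exists_mem_axesCorner_dist_le {τ : ℝ} {p : ℝ × ℝ} (hp : p ∈ hyperbolaArc τ) :
    ∃ q ∈ axesCorner, dist p q ≤ √τ := by
  obtain ⟨z, w⟩ := p
  obtain ⟨⟨hz0, hz1⟩, ⟨hw0, hw1⟩, rfl⟩ := hp
  have hzw : z ≤ √(z * w) ∨ w ≤ √(z * w) := by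
    by_contra! h
    nlinarith [Real.mul_self_sqrt (mul_nonneg hz0 hw0), Real.sqrt_nonneg (z * w)]
  rcases hzw with hz | hw
  · refine ⟨(0, w), Or.inr ⟨rfl, hw0, hw1⟩, ?_⟩
    simpa [Prod.dist_eq, Real.dist_eq, abs_of_nonneg hz0] using hz
  · refine ⟨(z, 0), Or.inl ⟨⟨hz0, hz1⟩, rfl⟩, ?_⟩
    simpa [Prod.dist_eq, Real.dist_eq, abs_of_nonneg hw0] using hw

theorem exists_mem_hyperbolaArc_near {τ z : ℝ} (hτ : τ ∈ Ioc 0 1) (hz : z ∈ Icc 0 1) :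
    ∃ a b, (a, b) ∈ hyperbolaArc τ ∧ |z - a| ≤ √τ ∧ b ≤ √τ := by
  obtain ⟨hτ0, hτ1⟩ := hτ
  have hs0 : 0 < √τ := Real.sqrt_pos.mpr hτ0
  have hs1 : √τ ≤ 1 := Real.sqrt_le_one.mpr hτ1
  have hss : √τ * √τ = τ := Real.mul_self_sqrt hτ0.le
  rcases le_total √τ z with hsz | hzs
  · have hz0 : 0 < z := hs0.trans_le hsz
    have hτz : τ ≤ z := by nlinarith
    refine ⟨z, τ / z, ⟨hz, ⟨by positivity, div_le_one_of_le₀ hτz hz0.le⟩,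
      mul_div_cancel₀ τ hz0.ne'⟩, by simp [hs0.le], ?_⟩
    rw [div_le_iff₀ hz0]
    nlinarith
  · refine ⟨√τ, √τ, ⟨⟨hs0.le, hs1⟩, ⟨hs0.le, hs1⟩, hss⟩, ?_, le_rfl⟩
    rw [abs_sub_comm, abs_of_nonneg (sub_nonneg.mpr hzs)]
    linarith [hz.1]

theorem exists_mem_hyperbolaArc_dist_le {τ : ℝ} (hτ : τ ∈ Ioc 0 1) {q : ℝ × ℝ}
    (hq : q ∈ axesCorner) : ∃ p ∈ hyperbolaArc τ, dist p q ≤ √τ := by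
  obtain ⟨z, w⟩ := q
  rcases hq with ⟨hz, rfl : w = 0⟩ | ⟨rfl : z = 0, hw⟩
  · obtain ⟨a, b, hab, hza, hb⟩ := exists_mem_hyperbolaArc_near hτ hz
    refine ⟨(a, b), hab, ?_⟩
    rw [Prod.dist_eq, Real.dist_eq, Real.dist_eq, abs_sub_comm, sub_zero,
      abs_of_nonneg hab.2.1.1]
    exact max_le hza hb
  · obtain ⟨a, b, ⟨ha, hb, hab⟩, hwa, hb'⟩ := exists_mem_hyperbolaArc_near hτ hw
    refine ⟨(b, a), ⟨hb, ha, by rw [mul_comm, hab]⟩, ?_⟩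
    rw [Prod.dist_eq, Real.dist_eq, Real.dist_eq, abs_sub_comm a, sub_zero, abs_of_nonneg hb.1]
    exact max_le hb' hwa

section ScaleMap

variable {E F : Type*} [SeminormedAddCommGroup E] [NormedSpace ℝ E]
  [SeminormedAddCommGroup F] [NormedSpace ℝ F]

def scaleMap (x : E) (y : F) (p : ℝ × ℝ) : E × F :=
  (p.1 • x, p.2 • y)

theorem lipschitzWith_scaleMap (x : E) (y : F) :
    LipschitzWith (max ‖x‖₊ ‖y‖₊) (scaleMap x y) := by
  refine LipschitzWith.of_dist_le_mul fun p q ↦ ?_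
  rw [Prod.dist_eq, Prod.dist_eq, Real.dist_eq, Real.dist_eq]
  simp only [scaleMap, dist_eq_norm, ← sub_smul, norm_smul, NNReal.coe_max, coe_nnnorm,
    Real.norm_eq_abs]
  have hpq : 0 ≤ max |p.1 - q.1| |p.2 - q.2| := (abs_nonneg _).trans (le_max_left _ _)
  rw [mul_comm (max ‖x‖ ‖y‖)]
  exact max_le (mul_le_mul (le_max_left _ _) (le_max_left _ _) (norm_nonneg _) hpq)
    (mul_le_mul (le_max_right _ _) (le_max_right _ _) (norm_nonneg _) hpq)

theorem dist_scaleMap_scaleMap_le (x x' : E) (y y' : F) {p : ℝ × ℝ} (hp : ‖p‖ ≤ 1) :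
    dist (scaleMap x' y' p) (scaleMap x y p) ≤ max ‖x' - x‖ ‖y' - y‖ := by
  rw [Prod.dist_eq]
  simp only [scaleMap, dist_eq_norm, ← smul_sub, norm_smul]
  exact max_le_max (mul_le_of_le_one_left (norm_nonneg _) ((norm_fst_le p).trans hp))
    (mul_le_of_le_one_left (norm_nonneg _) ((norm_snd_le p).trans hp))

end ScaleMap

section FlowLines

variable {m k : ℕ}

theorem flowSegImage_eq_image {τ : ℝ} (hτ : 0 < τ) (x : EuclideanSpace ℝ (Fin m))
    (y : EuclideanSpace ℝ (Fin k)) : flowSegImage m k τ x y = scaleMap x y '' hyperbolaArc τ := by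
  ext p
  constructor
  · rintro ⟨z, ⟨hτz, hz1⟩, rfl⟩
    have hz0 : 0 < z := hτ.trans_le hτz
    exact ⟨(z, τ / z), ⟨⟨hz0.le, hz1⟩, ⟨by positivity, div_le_one_of_le₀ hτz hz0.le⟩,
      mul_div_cancel₀ τ hz0.ne'⟩, rfl⟩
  · rintro ⟨⟨z, w⟩, ⟨⟨hz0, hz1⟩, ⟨hw0, hw1⟩, rfl⟩, rfl⟩
    have hz0' : 0 < z := by
      by_contra! h
      nlinarith
    refine ⟨z, ⟨by nlinarith, hz1⟩, ?_⟩
    simp [scaleMap, mul_div_cancel_left₀ w hz0'.ne']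

theorem brokenSegImage_eq_image (x : EuclideanSpace ℝ (Fin m)) (y : EuclideanSpace ℝ (Fin k)) :
    brokenSegImage m k x y = scaleMap x y '' axesCorner := by
  simp only [brokenSegImage, axesCorner, image_union]
  congr 1 <;> ext p <;> simp [scaleMap, eq_comm]

theorem hausdorffDist_flowSegImage_brokenSegImage_le {τ : ℝ} (hτ : τ ∈ Ioc 0 1)
    (x x' : EuclideanSpace ℝ (Fin m)) (y y' : EuclideanSpace ℝ (Fin k)) :
    hausdorffDist (flowSegImage m k τ x' y') (brokenSegImage m k x y)
      ≤ max ‖x' - x‖ ‖y' - y‖ + max ‖x‖ ‖y‖ * √τ := by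
  rw [flowSegImage_eq_image hτ.1, brokenSegImage_eq_image]
  have hperturb :
      hausdorffEDist (scaleMap x' y' '' hyperbolaArc τ) (scaleMap x y '' hyperbolaArc τ)
        ≤ ENNReal.ofReal (max ‖x' - x‖ ‖y' - y‖) :=
    hausdorffEDist_image_image_le fun _ hp ↦
      dist_scaleMap_scaleMap_le x x' y y' (norm_le_one_of_mem_hyperbolaArc hp)
  have hbreak : hausdorffEDist (scaleMap x y '' hyperbolaArc τ) (scaleMap x y '' axesCorner)
      ≤ ENNReal.ofReal (max ‖x‖ ‖y‖ * √τ) := by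
    simpa using (lipschitzWith_scaleMap x y).hausdorffEDist_image_le_of_mem_dist
      (fun _ ↦ exists_mem_axesCorner_dist_le) (fun _ ↦ exists_mem_hyperbolaArc_dist_le hτ)
  refine ENNReal.toReal_le_of_le_ofReal (by positivity) ?_
  calc hausdorffEDist _ _ ≤ _ := hausdorffEDist_triangle
    _ ≤ _ := add_le_add hperturb hbreak
    _ = _ := (ENNReal.ofReal_add (by positivity) (by positivity)).symm

end FlowLines

theorem exists_pos_two_mul_add_mul_sqrt_lt (c : ℝ) {ε : ℝ} (hε : 0 < ε) :
    ∃ δ > 0, 2 * δ + c * √δ < ε := by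
  have hcont : Tendsto (fun δ ↦ 2 * δ + c * √δ) (𝓝[>] 0) (𝓝 0) := by
    have : Continuous fun δ ↦ 2 * δ + c * √δ := by fun_prop
    simpa using (this.tendsto 0).mono_left nhdsWithin_le_nhds
  obtain ⟨δ, hδε, hδ⟩ := ((hcont.eventually (gt_mem_nhds hε)).and self_mem_nhdsWithin).exists
  exact ⟨δ, hδ, hδε⟩

theorem stmt_10_general (m k : ℕ) (Δ : ℝ)
    (x x' : EuclideanSpace ℝ (Fin m)) (y y' : EuclideanSpace ℝ (Fin k))
    (hx : ‖x‖ ≤ Δ) (hy : ‖y‖ ≤ Δ)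
    (τ' : ℝ) (hτ' : τ' ∈ Set.Ioc (0:ℝ) 1) :
    Metric.hausdorffDist (flowSegImage m k τ' x' y') (brokenSegImage m k x y)
      ≤ ‖x' - x‖ + ‖y' - y‖ + 4 * Δ * Real.sqrt τ' ∧
    (∀ ε > (0:ℝ), ∃ δ > (0:ℝ),
      ∀ (τ'' : ℝ) (x'' : EuclideanSpace ℝ (Fin m)) (y'' : EuclideanSpace ℝ (Fin k)),
        τ'' ∈ Set.Ioc (0:ℝ) 1 → ‖x''‖ ≤ Δ → ‖y''‖ ≤ Δ →
        τ'' < δ → ‖x'' - x‖ < δ → ‖y'' - y‖ < δ →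
        Metric.hausdorffDist (flowSegImage m k τ'' x'' y'') (brokenSegImage m k x y) < ε) := by
  have hΔ : 0 ≤ Δ := (norm_nonneg x).trans hx
  have hbound : ∀ τ ∈ Ioc (0 : ℝ) 1, ∀ x'' y'',
      hausdorffDist (flowSegImage m k τ x'' y'') (brokenSegImage m k x y)
        ≤ ‖x'' - x‖ + ‖y'' - y‖ + Δ * √τ := fun τ hτ x'' y'' ↦
    (hausdorffDist_flowSegImage_brokenSegImage_le hτ x x'' y y'').trans
      (add_le_add (max_le_add_of_nonneg (norm_nonneg _) (norm_nonneg _))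
        (mul_le_mul_of_nonneg_right (max_le hx hy) (Real.sqrt_nonneg τ)))
  have hsqrt : 0 ≤ Δ * √τ' := mul_nonneg hΔ (Real.sqrt_nonneg τ')
  refine ⟨(hbound τ' hτ' x' y').trans (by linarith), fun ε hε ↦ ?_⟩
  obtain ⟨δ, hδ, hδε⟩ := exists_pos_two_mul_add_mul_sqrt_lt Δ hε
  refine ⟨δ, hδ, fun τ'' x'' y'' hτ'' _ _ hτδ hxδ hyδ ↦ ?_⟩
  calc _ ≤ ‖x'' - x‖ + ‖y'' - y‖ + Δ * √τ'' := hbound τ'' hτ'' x'' y''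
    _ ≤ ‖x'' - x‖ + ‖y'' - y‖ + Δ * √δ := by gcongr
    _ < 2 * δ + Δ * √δ := by linarith
    _ < ε := hδε

/-- Hausdorff distance estimate between an unbroken flow segment image and the
broken trajectory image: `d_H(C', C) ≤ |x'-x| + |y'-y| + 4Δ√τ'`; in particular
the flow-line images converge in the Hausdorff distance as `(τ',x',y') → (0,x,y)`. -/
theorem stmt_10 (m k : ℕ) (Δ : ℝ) (hΔ : 0 < Δ)
    (x x' : EuclideanSpace ℝ (Fin m)) (y y' : EuclideanSpace ℝ (Fin k))
    (hx : ‖x‖ ≤ Δ) (hx' : ‖x'‖ ≤ Δ) (hy : ‖y‖ ≤ Δ) (hy' : ‖y'‖ ≤ Δ)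
    (τ' : ℝ) (hτ' : τ' ∈ Set.Ioc (0:ℝ) 1) :
    Metric.hausdorffDist (flowSegImage m k τ' x' y') (brokenSegImage m k x y)
      ≤ ‖x' - x‖ + ‖y' - y‖ + 4 * Δ * Real.sqrt τ' ∧
    (∀ ε > (0:ℝ), ∃ δ > (0:ℝ),
      ∀ (τ'' : ℝ) (x'' : EuclideanSpace ℝ (Fin m)) (y'' : EuclideanSpace ℝ (Fin k)),
        τ'' ∈ Set.Ioc (0:ℝ) 1 → ‖x''‖ ≤ Δ → ‖y''‖ ≤ Δ →
        τ'' < δ → ‖x'' - x‖ < δ → ‖y'' - y‖ < δ →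
        Metric.hausdorffDist (flowSegImage m k τ'' x'' y'') (brokenSegImage m k x y) < ε) :=
  stmt_10_general m k Δ x x' y y' hx hy τ' hτ'
end

section
/- Fix Δ > 0 and points (x, y), (x', y') ∈ ℝ^m × ℝ^k with norms ≤ Δ, and τ, τ' ∈ (0, 1]. Let C = {(z x, (τ/z) y) : z ∈ [τ, 1]} and C' = {(z x', (τ'/z) y') : z ∈ [τ', 1]}. Then d_H(C', C) ≤ |x' - x| + |y' - y| + 2Δ(1 + τ^{-1})|τ' - τ|. -/
lemma aux_real (p q w : ℝ) (hp : 0 < p) (hp1 : p ≤ 1) (hq : 0 < q)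
    (hw : q ≤ w) (hw1 : w ≤ 1) :
    (p ≤ max p w ∧ max p w ≤ 1) ∧ |max p w - w| ≤ |p - q| ∧
      |p / max p w - q / w| ≤ |p - q| / max p q := by
  have hw0 : 0 < w := lt_of_lt_of_le hq hw
  have hmaxpq : 0 < max p q := lt_max_iff.2 (Or.inl hp)
  rcases le_or_gt p w with h | h
  · rw [max_eq_right h]
    refine ⟨⟨h, hw1⟩, by simp, ?_⟩
    rw [div_sub_div_same, abs_div, abs_of_pos hw0]
    have hwge : max p q ≤ w := max_le h hw
    gcongr
  · have hqp : q < p := lt_of_le_of_lt hw h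
    rw [max_eq_left h.le, max_eq_left hqp.le, div_self hp.ne']
    have h1 : |p - w| = p - w := abs_of_pos (by linarith)
    have h2 : |p - q| = p - q := abs_of_pos (by linarith)
    have h3 : q / w ≤ 1 := (div_le_one hw0).2 hw
    have h4 : q / p ≤ q / w := by gcongr
    refine ⟨⟨le_refl p, hp1⟩, by rw [h1, h2]; linarith, ?_⟩
    rw [abs_of_nonneg (by linarith), h2, sub_div, div_self hp.ne']
    linarith

lemma aux_dir {m k : ℕ} (Δ : ℝ) (hΔ : 0 < Δ)
    (x x' : EuclideanSpace ℝ (Fin m)) (y y' : EuclideanSpace ℝ (Fin k))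
    (hx : ‖x‖ ≤ Δ) (hy : ‖y‖ ≤ Δ)
    (τ τ' : ℝ) (hτ : τ ∈ Set.Ioc (0:ℝ) 1) (hτ' : τ' ∈ Set.Ioc (0:ℝ) 1) :
    ∀ p ∈ {p : EuclideanSpace ℝ (Fin m) × EuclideanSpace ℝ (Fin k) |
        ∃ z ∈ Set.Icc τ' 1, p = (z • x', (τ' / z) • y')},
      ∃ q ∈ {p : EuclideanSpace ℝ (Fin m) × EuclideanSpace ℝ (Fin k) |
        ∃ z ∈ Set.Icc τ 1, p = (z • x, (τ / z) • y)},
        dist p q ≤ ‖x' - x‖ + ‖y' - y‖ + Δ * (1 + (max τ τ')⁻¹) * |τ' - τ| := by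
  rintro p ⟨w, ⟨hw1, hw2⟩, rfl⟩
  obtain ⟨⟨hz1, hz2⟩, hzw, hdiv⟩ :=
    aux_real τ τ' w hτ.1 hτ.2 hτ'.1 hw1 hw2
  set z := max τ w with hz
  refine ⟨(z • x, (τ / z) • y), ⟨z, ⟨hz1, hz2⟩, rfl⟩, ?_⟩
  have hw0 : 0 < w := lt_of_lt_of_le hτ'.1 hw1
  have hwabs : |w| ≤ 1 := by rw [abs_of_pos hw0]; exact hw2
  have hslope : |τ' / w| ≤ 1 := by
    rw [abs_of_nonneg (div_nonneg hτ'.1.le hw0.le)]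
    exact (div_le_one hw0).2 hw1
  have hmaxpos : 0 < max τ τ' := lt_max_iff.2 (Or.inl hτ.1)
  rw [Prod.dist_eq]
  have e1 : dist (w • x') (z • x) ≤ ‖x' - x‖ + |τ' - τ| * Δ := by
    rw [dist_eq_norm]
    have : w • x' - z • x = w • (x' - x) + (w - z) • x := by
      rw [smul_sub, sub_smul]; abel
    rw [this]
    calc ‖w • (x' - x) + (w - z) • x‖ ≤ ‖w • (x' - x)‖ + ‖(w - z) • x‖ :=
          norm_add_le _ _
      _ = |w| * ‖x' - x‖ + |w - z| * ‖x‖ := by rw [norm_smul, norm_smul]; rfl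
      _ ≤ 1 * ‖x' - x‖ + |τ' - τ| * Δ := by
          have hzw' : |w - z| ≤ |τ' - τ| := by
            rw [abs_sub_comm]; exact hzw.trans_eq (abs_sub_comm _ _)
          exact add_le_add (mul_le_mul hwabs le_rfl (norm_nonneg _) zero_le_one)
            (mul_le_mul hzw' hx (norm_nonneg _) (abs_nonneg _))
      _ = ‖x' - x‖ + |τ' - τ| * Δ := by ring
  have e2 : dist ((τ' / w) • y') ((τ / z) • y) ≤
      ‖y' - y‖ + (max τ τ')⁻¹ * |τ' - τ| * Δ := by
    rw [dist_eq_norm]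
    have : (τ' / w) • y' - (τ / z) • y =
        (τ' / w) • (y' - y) + (τ' / w - τ / z) • y := by
      rw [smul_sub, sub_smul]; abel
    rw [this]
    calc ‖(τ' / w) • (y' - y) + (τ' / w - τ / z) • y‖
        ≤ ‖(τ' / w) • (y' - y)‖ + ‖(τ' / w - τ / z) • y‖ := norm_add_le _ _
      _ = |τ' / w| * ‖y' - y‖ + |τ' / w - τ / z| * ‖y‖ := by
          rw [norm_smul, norm_smul]; rfl
      _ ≤ 1 * ‖y' - y‖ + ((max τ τ')⁻¹ * |τ' - τ|) * Δ := by
          have hdiv' : |τ' / w - τ / z| ≤ (max τ τ')⁻¹ * |τ' - τ| := by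
            rw [abs_sub_comm]
            calc |τ / z - τ' / w| ≤ |τ - τ'| / max τ τ' := hdiv
              _ = (max τ τ')⁻¹ * |τ' - τ| := by
                  rw [div_eq_inv_mul, abs_sub_comm]
          exact add_le_add (mul_le_mul hslope le_rfl (norm_nonneg _) zero_le_one)
            (mul_le_mul hdiv' hy (norm_nonneg _)
              (mul_nonneg (inv_nonneg.2 hmaxpos.le) (abs_nonneg _)))
      _ = ‖y' - y‖ + (max τ τ')⁻¹ * |τ' - τ| * Δ := by ring
  have hn1 : (0:ℝ) ≤ ‖x' - x‖ := norm_nonneg _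
  have hn2 : (0:ℝ) ≤ ‖y' - y‖ := norm_nonneg _
  have ha : (0:ℝ) ≤ |τ' - τ| := abs_nonneg _
  have hi : (0:ℝ) ≤ (max τ τ')⁻¹ := inv_nonneg.2 hmaxpos.le
  apply max_le
  · nlinarith [mul_nonneg hi ha]
  · nlinarith [mul_nonneg hi ha]

/-- Hausdorff distance estimate between images of two unbroken flow segments:
`d_H(C', C) ≤ |x'-x| + |y'-y| + 2Δ(1+τ⁻¹)|τ'-τ|`. -/
theorem stmt_11 (m k : ℕ) (Δ : ℝ) (hΔ : 0 < Δ)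
    (x x' : EuclideanSpace ℝ (Fin m)) (y y' : EuclideanSpace ℝ (Fin k))
    (hx : ‖x‖ ≤ Δ) (hx' : ‖x'‖ ≤ Δ) (hy : ‖y‖ ≤ Δ) (hy' : ‖y'‖ ≤ Δ)
    (τ τ' : ℝ) (hτ : τ ∈ Set.Ioc (0:ℝ) 1) (hτ' : τ' ∈ Set.Ioc (0:ℝ) 1) :
    Metric.hausdorffDist
      {p : EuclideanSpace ℝ (Fin m) × EuclideanSpace ℝ (Fin k) |
        ∃ z ∈ Set.Icc τ' 1, p = (z • x', (τ' / z) • y')}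
      {p : EuclideanSpace ℝ (Fin m) × EuclideanSpace ℝ (Fin k) |
        ∃ z ∈ Set.Icc τ 1, p = (z • x, (τ / z) • y)}
      ≤ ‖x' - x‖ + ‖y' - y‖ + 2 * Δ * (1 + τ⁻¹) * |τ' - τ| := by
  have hmid : ‖x' - x‖ + ‖y' - y‖ + Δ * (1 + (max τ τ')⁻¹) * |τ' - τ|
      ≤ ‖x' - x‖ + ‖y' - y‖ + 2 * Δ * (1 + τ⁻¹) * |τ' - τ| := by
    have h1 : (max τ τ')⁻¹ ≤ τ⁻¹ := by
      apply inv_anti₀ hτ.1 (le_max_left _ _)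
    have h2 : Δ * (1 + (max τ τ')⁻¹) ≤ 2 * Δ * (1 + τ⁻¹) := by
      nlinarith [inv_nonneg.2 hτ.1.le]
    have := mul_le_mul_of_nonneg_right h2 (abs_nonneg (τ' - τ))
    linarith
  apply Metric.hausdorffDist_le_of_mem_dist
  · refine add_nonneg (add_nonneg (norm_nonneg _) (norm_nonneg _)) ?_
    exact mul_nonneg (mul_nonneg (mul_nonneg (by norm_num) hΔ.le)
      (by have := inv_nonneg.2 hτ.1.le; linarith)) (abs_nonneg _)
  · intro p hp
    obtain ⟨q, hq, hd⟩ := aux_dir Δ hΔ x x' y y' hx hy τ τ' hτ hτ' p hp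
    exact ⟨q, hq, hd.trans hmid⟩
  · intro p hp
    obtain ⟨q, hq, hd⟩ := aux_dir Δ hΔ x' x y' y hx' hy' τ' τ hτ' hτ p hp
    refine ⟨q, hq, ?_⟩
    have : ‖x - x'‖ + ‖y - y'‖ + Δ * (1 + (max τ' τ)⁻¹) * |τ - τ'|
        = ‖x' - x‖ + ‖y' - y‖ + Δ * (1 + (max τ τ')⁻¹) * |τ' - τ| := by
      rw [norm_sub_rev, norm_sub_rev y, abs_sub_comm, max_comm]
    rw [this] at hd
    exact hd.trans hmid
end
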